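/- Let (X,T) be a minimal Cantor system and let α ∈ I(X,T) (that is, for every μ ∈ M(X,T) there exists f ∈ C(X,ℤ) with ∫ f dμ = α). Then there exists a single function g ∈ C(X,ℤ) such that ∫ g dμ = α for every μ ∈ M(X,T). -/

import Mathlib

/-!
Suppose no single `g` works, so every `g ∈ C(X, ℤ)` has an invariant measure `μ_g` with
`∫ g dμ_g ≠ α`. Since `C(X, ℤ)` is countable we can list these measures as `μ_0, μ_1, …` and
form the invariant mixtures `ν_t = (1 - t) ∑ tⁿ μ_n`, `0 < t < 1`. For each `t` some `g` has
`∫ g dν_t = α`, i.e. `t` is a zero of the power series `∑ (∫ g dμ_n - α) tⁿ`. Uncountably many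
`t` share countably many series, so one series has infinitely many zeros in `[1/4, 1/2]` and
vanishes identically by the identity theorem; its coefficient at the index of `μ_g` then
contradicts the choice of `μ_g`.
-/

open MeasureTheory Set Filter Topology

instance ContinuousMap.discreteTopology_int {X : Type*} [TopologicalSpace X] [CompactSpace X] :
    DiscreteTopology C(X, ℤ) :=
  DiscreteTopology.of_forall_le_dist one_pos fun f g hfg => by
    obtain ⟨x, hx⟩ := DFunLike.ne_iff.mp hfg
    calc (1 : ℝ) ≤ dist (f x) (g x) := by
          rw [Int.dist_eq]; exact_mod_cast Int.one_le_abs (sub_ne_zero.mpr hx)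
      _ ≤ dist f g := ContinuousMap.dist_apply_le_dist x

theorem ContinuousMap.countable_int (X : Type*) [TopologicalSpace X] [CompactSpace X] [T2Space X]
    [SecondCountableTopology X] : Countable C(X, ℤ) :=
  TopologicalSpace.separableSpace_iff_countable.mp inferInstance

theorem FormalMultilinearSeries.one_le_radius_ofScalars {a : ℕ → ℝ} {C : ℝ}
    (ha : ∀ n, ‖a n‖ ≤ C) : 1 ≤ (ofScalars ℝ a).radius := by
  simpa using (ofScalars ℝ a).le_radius_of_bound (r := 1) C fun n => by
    simpa [ofScalars_norm] using ha n

theorem eq_zero_of_tsum_mul_pow_eq_zero_of_infinite {a : ℕ → ℝ} {C : ℝ} (ha : ∀ n, ‖a n‖ ≤ C)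
    {r : ℝ} (hr : r < 1) {s : Set ℝ} (hsr : s ⊆ Icc (-r) r) (hs : s.Infinite)
    (hzero : ∀ t ∈ s, ∑' n, a n * t ^ n = 0) : a = 0 := by
  set p := FormalMultilinearSeries.ofScalars ℝ a
  have hradius := FormalMultilinearSeries.one_le_radius_ofScalars ha
  have hp : HasFPowerSeriesOnBall p.sum p 0 1 :=
    (p.hasFPowerSeriesOnBall (zero_lt_one.trans_le hradius)).mono zero_lt_one hradius
  have hsum (t : ℝ) : p.sum t = ∑' n, a n * t ^ n :=
    FormalMultilinearSeries.ofScalars_sum_eq a t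
  obtain ⟨x, hx, hacc⟩ := hs.exists_accPt_of_subset_isCompact isCompact_Icc hsr
  have hx_mem : x ∈ Metric.eball (0 : ℝ) 1 := by
    rw [Metric.mem_eball, edist_zero_right, ← ofReal_norm, ENNReal.ofReal_lt_one,
      Real.norm_eq_abs]
    exact (abs_le.mpr hx).trans_lt hr
  have hfreq : ∃ᶠ z in 𝓝[≠] x, p.sum z = 0 :=
    (accPt_iff_frequently_nhdsNE.mp hacc).mono fun t ht => (hsum t).trans (hzero t ht)
  have hzero_ball := hp.analyticOnNhd.eqOn_zero_of_preconnected_of_frequently_eq_zero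
    (convex_eball 0 1).isPreconnected hx_mem hfreq
  have hp_zero : p = 0 := hp.hasFPowerSeriesAt.locally_zero_iff.mp <|
    eventually_of_mem (Metric.eball_mem_nhds 0 zero_lt_one) hzero_ball
  exact (FormalMultilinearSeries.ofScalars_series_eq_zero ℝ).mp hp_zero

theorem exists_eq_zero_of_forall_exists_tsum_mul_pow_eq_zero {ι : Type*} [Countable ι]
    {a : ι → ℕ → ℝ} (ha : ∀ i, ∃ C, ∀ n, ‖a i n‖ ≤ C)
    (h : ∀ t ∈ Ioo (0 : ℝ) 1, ∃ i, ∑' n, a i n * t ^ n = 0) : ∃ i, a i = 0 := by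
  set Z : ι → Set ℝ := fun i => {t ∈ Icc (1 / 4) (1 / 2) | ∑' n, a i n * t ^ n = 0}
  have hcover : Icc (1 / 4 : ℝ) (1 / 2) ⊆ ⋃ i, Z i := fun t ht => by
    obtain ⟨i, hi⟩ := h t ⟨by linarith [ht.1], by linarith [ht.2]⟩
    exact mem_iUnion.mpr ⟨i, ht, hi⟩
  obtain ⟨i, hi⟩ : ∃ i, (Z i).Infinite := by
    by_contra! hfin
    have := (countable_iUnion fun i => (hfin i).countable).mono hcover
    norm_num at this
  obtain ⟨C, hC⟩ := ha i
  refine ⟨i, eq_zero_of_tsum_mul_pow_eq_zero_of_infinite hC (r := 1 / 2) (by norm_num)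
    (fun t ht => ⟨by linarith [ht.1.1], ht.1.2⟩) hi fun t ht => ht.2⟩

section GeomMixture

variable {X : Type*} [MeasurableSpace X]

noncomputable def geomMixture (μ : ℕ → Measure X) (t : ℝ) : Measure X :=
  Measure.sum fun n => ENNReal.ofReal ((1 - t) * t ^ n) • μ n

variable {μ : ℕ → Measure X} {t : ℝ}

theorem map_geomMixture {Y : Type*} [MeasurableSpace Y] {f : X → Y} (hf : Measurable f) :
    (geomMixture μ t).map f = geomMixture (fun n => (μ n).map f) t := by
  simp only [geomMixture, Measure.map_sum hf.aemeasurable, Measure.map_smul]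

variable [∀ n, IsProbabilityMeasure (μ n)]

theorem isProbabilityMeasure_geomMixture (ht0 : 0 ≤ t) (ht1 : t < 1) :
    IsProbabilityMeasure (geomMixture μ t) := by
  constructor
  have h1t : 0 < 1 - t := by linarith
  simp only [geomMixture, Measure.sum_apply _ MeasurableSet.univ, Measure.smul_apply,
    measure_univ, smul_eq_mul, mul_one, ENNReal.ofReal_mul h1t.le, ENNReal.ofReal_pow ht0,
    ENNReal.tsum_mul_left, ENNReal.tsum_geometric]
  rw [← ENNReal.ofReal_one, ← ENNReal.ofReal_sub _ ht0, ENNReal.ofReal_one]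
  exact ENNReal.mul_inv_cancel (by simpa using h1t) ENNReal.ofReal_ne_top

theorem integral_geomMixture (ht0 : 0 ≤ t) (ht1 : t < 1) {f : X → ℝ} (hf : Measurable f)
    {C : ℝ} (hC : ∀ x, ‖f x‖ ≤ C) :
    ∫ x, f x ∂geomMixture μ t = (1 - t) * ∑' n, (∫ x, f x ∂μ n) * t ^ n := by
  have := isProbabilityMeasure_geomMixture (μ := μ) ht0 ht1
  have hfi : Integrable f (geomMixture μ t) :=
    .of_bound hf.aestronglyMeasurable C (ae_of_all _ hC)
  rw [geomMixture, integral_sum_measure hfi, ← tsum_mul_left]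
  refine tsum_congr fun n => ?_
  have : 0 ≤ (1 - t) * t ^ n := mul_nonneg (by linarith) (pow_nonneg ht0 n)
  rw [integral_smul_measure, ENNReal.toReal_ofReal this, smul_eq_mul]
  ring

theorem integral_geomMixture_sub (ht0 : 0 ≤ t) (ht1 : t < 1) {f : X → ℝ} (hf : Measurable f)
    {C : ℝ} (hC : ∀ x, ‖f x‖ ≤ C) (c : ℝ) :
    ∫ x, f x ∂geomMixture μ t - c = (1 - t) * ∑' n, (∫ x, f x ∂μ n - c) * t ^ n := by
  have hgeom : Summable (t ^ ·) := summable_geometric_of_lt_one ht0 ht1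
  have hsum : Summable fun n => (∫ x, f x ∂μ n) * t ^ n :=
    .of_norm_bounded (hgeom.mul_left C) fun n => by
      rw [norm_mul, norm_pow, Real.norm_of_nonneg ht0]
      gcongr
      simpa using norm_integral_le_of_norm_le_const (μ := μ n) (ae_of_all _ hC)
  have h1t : 1 - t ≠ 0 := by linarith
  calc ∫ x, f x ∂geomMixture μ t - c
      = (1 - t) * (∑' n, (∫ x, f x ∂μ n) * t ^ n - ∑' n, c * t ^ n) := by
        rw [integral_geomMixture ht0 ht1 hf hC, tsum_mul_left, tsum_geometric_of_lt_one ht0 ht1]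
        field_simp
    _ = (1 - t) * ∑' n, (∫ x, f x ∂μ n - c) * t ^ n := by
        rw [← hsum.tsum_sub (hgeom.mul_left c)]
        simp only [sub_mul]

end GeomMixture

theorem stmt2_general {X : Type*} [TopologicalSpace X] [CompactSpace X]
    [TopologicalSpace.MetrizableSpace X]
    [MeasurableSpace X] [BorelSpace X]
    (T : X ≃ₜ X)
    (α : ℝ)
    (hα : ∀ μ : Measure X, IsProbabilityMeasure μ → Measure.map T μ = μ →
      ∃ f : C(X, ℤ), ∫ x, (f x : ℝ) ∂μ = α) :
    ∃ g : C(X, ℤ), ∀ μ : Measure X, IsProbabilityMeasure μ → Measure.map T μ = μ →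
      ∫ x, (g x : ℝ) ∂μ = α := by
  by_contra! h
  choose μ hμ hTμ hne using h
  have := ContinuousMap.countable_int X
  obtain ⟨F, hF⟩ := exists_surjective_nat C(X, ℤ)
  have hbdd (g : C(X, ℤ)) : ∀ x, ‖(g x : ℝ)‖ ≤ ‖g‖ := fun x => by
    rw [Int.norm_cast_real]; exact g.norm_coe_le_norm x
  have hcoeff (g : C(X, ℤ)) : ∃ C, ∀ n, ‖∫ x, (g x : ℝ) ∂μ (F n) - α‖ ≤ C := by
    refine ⟨‖g‖ + ‖α‖, fun n => (norm_sub_le _ _).trans ?_⟩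
    gcongr
    simpa using norm_integral_le_of_norm_le_const (μ := μ (F n)) (ae_of_all _ (hbdd g))
  have hzero (t : ℝ) (ht : t ∈ Ioo 0 1) :
      ∃ g : C(X, ℤ), ∑' n, (∫ x, (g x : ℝ) ∂μ (F n) - α) * t ^ n = 0 := by
    obtain ⟨g, hg⟩ := hα (geomMixture (fun n => μ (F n)) t)
      (isProbabilityMeasure_geomMixture ht.1.le ht.2)
      (by simp only [map_geomMixture T.measurable, hTμ])
    have hmix := integral_geomMixture_sub (μ := fun n => μ (F n)) (f := fun x => (g x : ℝ))
      ht.1.le ht.2 (continuous_of_discreteTopology.comp g.continuous).measurable (hbdd g) α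
    rw [hg, sub_self, zero_eq_mul] at hmix
    exact ⟨g, hmix.resolve_left (by linarith [ht.2])⟩
  obtain ⟨g, hg⟩ := exists_eq_zero_of_forall_exists_tsum_mul_pow_eq_zero hcoeff hzero
  obtain ⟨k, rfl⟩ := hF g
  exact hne (F k) (sub_eq_zero.mp (congrFun hg k))

/-- If `(X,T)` is a minimal Cantor system and `α ∈ I(X,T)` (for every invariant
probability measure `μ` there is `f ∈ C(X,ℤ)` with `∫ f dμ = α`), then there is one single
`g ∈ C(X,ℤ)` with `∫ g dμ = α` for every invariant probability measure `μ`. -/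
theorem stmt2 {X : Type*} [TopologicalSpace X] [CompactSpace X]
    [TopologicalSpace.MetrizableSpace X]
    [TotallyDisconnectedSpace X] [Nonempty X] [MeasurableSpace X] [BorelSpace X]
    (hni : ∀ x : X, ¬IsOpen ({x} : Set X))
    (T : X ≃ₜ X)
    (hmin : ∀ x : X, Dense (Set.range fun n : ℤ => (T.toEquiv ^ n) x))
    (α : ℝ)
    (hα : ∀ μ : Measure X, IsProbabilityMeasure μ → Measure.map T μ = μ →
      ∃ f : C(X, ℤ), ∫ x, (f x : ℝ) ∂μ = α) :
    ∃ g : C(X, ℤ), ∀ μ : Measure X, IsProbabilityMeasure μ → Measure.map T μ = μ →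
      ∫ x, (g x : ℝ) ∂μ = α :=
  stmt2_general T α hα
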